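/- arXiv:2311.14885 — 4 statements merged into one kernel-verified Lean document; each statement's English description precedes it below -/
import Mathlib

section
/- Let the projected Bellman operator be Π_μ∘𝓑 where 𝓑(x) = R + γPx. Then the block matrix F_μ = [[ΦᵀD_μΦ, ΦᵀD_μPΦ], [ΦᵀPᵀD_μΦ, ΦᵀD_μΦ]] is positive semidefinite if and only if the projected Bellman operator is a γ-contraction on the column space of Φ in the μ-weighted norm, i.e. for all w₁, w₂ ∈ ℝᵏ, ‖Π_μ𝓑(Φw₁) − Π_μ𝓑(Φw₂)‖_μ ≤ γ‖Φw₁ − Φw₂‖_μ. -/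
/-!
With `A = ΦᵀD_μΦ` (positive definite, since `Φ` is injective and `μ > 0`) and `B = ΦᵀD_μPΦ`,
the reward cancels in a difference and `Π_μ𝓑(Φw₁) - Π_μ𝓑(Φw₂) = γ Φ A⁻¹B (w₁ - w₂)`,
while `‖Φv‖_μ² = vᵀAv`. So the contraction property says exactly that `A⁻¹B` is
nonexpansive for the norm `v ↦ (vᵀAv)^{1/2}`, i.e. `BᵀA⁻¹B ≤ A`, which by the Schur complement
criterion is the positive semidefiniteness of `F_μ = [[A, B], [Bᵀ, A]]`.
-/

open Matrix

noncomputable section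

/-- The μ-weighted norm `‖x‖_μ = (∑ s, μ s * x s ^ 2)^{1/2}`. -/
def wnorm {n : ℕ} (μ : Fin n → ℝ) (x : Fin n → ℝ) : ℝ :=
  Real.sqrt (∑ s, μ s * (x s) ^ 2)

section SchurCriterion

variable {m k : Type*} [Fintype m] [Fintype k]

theorem mulVec_dotProduct_mulVec_mulVec (M : Matrix m m ℝ) (C : Matrix m k ℝ) (v : k → ℝ) :
    (C *ᵥ v) ⬝ᵥ (M *ᵥ (C *ᵥ v)) = v ⬝ᵥ ((Cᵀ * M * C) *ᵥ v) := by
  rw [dotProduct_mulVec, dotProduct_mulVec, vecMul_vecMul, vecMul_mulVec, Matrix.mul_assoc,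
    ← dotProduct_mulVec]

theorem posSemidef_fromBlocks_transpose_iff [DecidableEq k] {A : Matrix k k ℝ}
    (B : Matrix k k ℝ) (hA : A.PosDef) :
    (fromBlocks A B Bᵀ A).PosSemidef ↔
      ∀ v, ((A⁻¹ * B) *ᵥ v) ⬝ᵥ (A *ᵥ ((A⁻¹ * B) *ᵥ v)) ≤ v ⬝ᵥ (A *ᵥ v) := by
  have := hA.isUnit.invertible
  have hAinvT : A⁻¹ᵀ = A⁻¹ := by
    rw [transpose_nonsing_inv, ← conjTranspose_eq_transpose_of_trivial, hA.isHermitian.eq]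
  have hconj : (A⁻¹ * B)ᵀ * A * (A⁻¹ * B) = Bᴴ * A⁻¹ * B := by
    rw [transpose_mul, hAinvT, Matrix.mul_assoc, Matrix.mul_assoc,
      mul_inv_cancel_left_of_invertible, ← Matrix.mul_assoc, conjTranspose_eq_transpose_of_trivial]
  rw [← conjTranspose_eq_transpose_of_trivial, hA.fromBlocks₁₁ B A,
    posSemidef_iff_dotProduct_mulVec]
  simp only [star_trivial, sub_mulVec, dotProduct_sub, sub_nonneg,
    mulVec_dotProduct_mulVec_mulVec, hconj]
  exact and_iff_right (hA.isHermitian.sub (isHermitian_conjTranspose_mul_mul B hA.isHermitian.inv))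

end SchurCriterion

section WeightedNorm

variable {n : ℕ} {k : Type*} [Fintype k]

theorem wnorm_eq_sqrt_dotProduct (μ x : Fin n → ℝ) :
    wnorm μ x = √(x ⬝ᵥ (diagonal μ *ᵥ x)) := by
  simp only [wnorm, dotProduct, mulVec_diagonal]
  congr 1
  exact Finset.sum_congr rfl fun s _ => by ring

theorem wnorm_mulVec (μ : Fin n → ℝ) (Φ : Matrix (Fin n) k ℝ) (v : k → ℝ) :
    wnorm μ (Φ *ᵥ v) = √(v ⬝ᵥ ((Φᵀ * diagonal μ * Φ) *ᵥ v)) := by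
  rw [wnorm_eq_sqrt_dotProduct, mulVec_dotProduct_mulVec_mulVec]

theorem wnorm_smul (μ : Fin n → ℝ) (c : ℝ) (x : Fin n → ℝ) :
    wnorm μ (c • x) = |c| * wnorm μ x := by
  rw [wnorm, wnorm, ← Real.sqrt_sq_eq_abs, ← Real.sqrt_mul (sq_nonneg c), Finset.mul_sum]
  congr 1
  exact Finset.sum_congr rfl fun s _ => by simp only [Pi.smul_apply, smul_eq_mul]; ring

theorem posDef_transpose_mul_diagonal_mul {μ : Fin n → ℝ} (hμ : ∀ s, 0 < μ s)
    {Φ : Matrix (Fin n) k ℝ} (hΦ : Function.Injective Φ.mulVec) :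
    (Φᵀ * diagonal μ * Φ).PosDef := by
  simpa using (PosDef.diagonal hμ).conjTranspose_mul_mul_same hΦ

end WeightedNorm

theorem mulVec_add_smul_mulVec_sub {n : Type*} [Fintype n] (M P : Matrix n n ℝ)
    (R x y : n → ℝ) (γ : ℝ) :
    M *ᵥ (R + γ • P *ᵥ x) - M *ᵥ (R + γ • P *ᵥ y) = γ • (M * P) *ᵥ (x - y) := by
  rw [mulVec_add, mulVec_add, mulVec_smul, mulVec_smul, mulVec_mulVec, mulVec_mulVec, mulVec_sub]
  module

theorem stmt0_general (n k : ℕ)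
    (P : Matrix (Fin n) (Fin n) ℝ)
    (R : Fin n → ℝ) (γ : ℝ) (hγ0 : 0 < γ)
    (Φ : Matrix (Fin n) (Fin k) ℝ) (hΦ : Function.Injective Φ.mulVec)
    (μ : Fin n → ℝ) (hμ0 : ∀ s, 0 < μ s)
    (D : Matrix (Fin n) (Fin n) ℝ) (hD : D = Matrix.diagonal μ)
    (Proj : Matrix (Fin n) (Fin n) ℝ)
    (hProj : Proj = Φ * (Φᵀ * D * Φ)⁻¹ * Φᵀ * D)
    (Bop : (Fin n → ℝ) → (Fin n → ℝ))
    (hBop : ∀ x, Bop x = R + γ • P.mulVec x) :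
    (Matrix.fromBlocks (Φᵀ * D * Φ) (Φᵀ * D * P * Φ)
        (Φᵀ * Pᵀ * D * Φ) (Φᵀ * D * Φ)).PosSemidef
      ↔ ∀ w₁ w₂ : Fin k → ℝ,
          wnorm μ (Proj.mulVec (Bop (Φ.mulVec w₁)) - Proj.mulVec (Bop (Φ.mulVec w₂)))
            ≤ γ * wnorm μ (Φ.mulVec w₁ - Φ.mulVec w₂) := by
  subst hD hProj
  set A := Φᵀ * diagonal μ * Φ
  set B := Φᵀ * diagonal μ * P * Φ
  have hA : A.PosDef := posDef_transpose_mul_diagonal_mul hμ0 hΦ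
  have hlower : Φᵀ * Pᵀ * diagonal μ * Φ = Bᵀ := by
    simp only [B, transpose_mul, diagonal_transpose, transpose_transpose, Matrix.mul_assoc]
  have hdiff : ∀ w₁ w₂, (Φ * A⁻¹ * Φᵀ * diagonal μ) *ᵥ Bop (Φ *ᵥ w₁)
      - (Φ * A⁻¹ * Φᵀ * diagonal μ) *ᵥ Bop (Φ *ᵥ w₂) = γ • Φ *ᵥ ((A⁻¹ * B) *ᵥ (w₁ - w₂)) := by
    intro w₁ w₂
    rw [hBop, hBop, mulVec_add_smul_mulVec_sub, ← mulVec_sub, mulVec_mulVec, mulVec_mulVec]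
    simp only [B, Matrix.mul_assoc]
  have hcontract : ∀ v, wnorm μ (γ • Φ *ᵥ ((A⁻¹ * B) *ᵥ v)) ≤ γ * wnorm μ (Φ *ᵥ v) ↔
      ((A⁻¹ * B) *ᵥ v) ⬝ᵥ (A *ᵥ ((A⁻¹ * B) *ᵥ v)) ≤ v ⬝ᵥ (A *ᵥ v) := by
    intro v
    rw [wnorm_smul, abs_of_pos hγ0, mul_le_mul_iff_right₀ hγ0, wnorm_mulVec, wnorm_mulVec,
      Real.sqrt_le_sqrt_iff (by simpa using hA.posSemidef.dotProduct_mulVec_nonneg v)]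
  rw [hlower, posSemidef_fromBlocks_transpose_iff B hA]
  simp only [hdiff, ← mulVec_sub, hcontract]
  exact ⟨fun h w₁ w₂ => h _, fun h v => by simpa using h v 0⟩

/-- the block matrix `F_μ` is positive semidefinite iff the projected
Bellman operator `Π_μ ∘ 𝓑` is a γ-contraction on the column space of Φ in `‖·‖_μ`. -/
theorem stmt0 (n k : ℕ)
    (P : Matrix (Fin n) (Fin n) ℝ)
    (hP0 : ∀ i j, 0 ≤ P i j) (hP1 : ∀ i, ∑ j, P i j = 1)
    (R : Fin n → ℝ) (γ : ℝ) (hγ0 : 0 < γ) (hγ1 : γ < 1)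
    (Φ : Matrix (Fin n) (Fin k) ℝ) (hΦ : Function.Injective Φ.mulVec)
    (μ : Fin n → ℝ) (hμ0 : ∀ s, 0 < μ s) (hμ1 : ∑ s, μ s = 1)
    (D : Matrix (Fin n) (Fin n) ℝ) (hD : D = Matrix.diagonal μ)
    (Proj : Matrix (Fin n) (Fin n) ℝ)
    (hProj : Proj = Φ * (Φᵀ * D * Φ)⁻¹ * Φᵀ * D)
    (Bop : (Fin n → ℝ) → (Fin n → ℝ))
    (hBop : ∀ x, Bop x = R + γ • P.mulVec x) :
    (Matrix.fromBlocks (Φᵀ * D * Φ) (Φᵀ * D * P * Φ)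
        (Φᵀ * Pᵀ * D * Φ) (Φᵀ * D * Φ)).PosSemidef
      ↔ ∀ w₁ w₂ : Fin k → ℝ,
          wnorm μ (Proj.mulVec (Bop (Φ.mulVec w₁)) - Proj.mulVec (Bop (Φ.mulVec w₂)))
            ≤ γ * wnorm μ (Φ.mulVec w₁ - Φ.mulVec w₂) :=
  stmt0_general n k P R γ hγ0 Φ hΦ μ hμ0 D hD Proj hProj Bop hBop
end
end

section
/- Suppose the block matrix F_μ = [[ΦᵀD_μΦ, ΦᵀD_μPΦ], [ΦᵀPᵀD_μΦ, ΦᵀD_μΦ]] is positive semidefinite. Then there exists a unique vector V̄ in the column space of Φ satisfying the projected Bellman equation V̄ = Π_μ(R + γPV̄), and this V̄ can be written as Φw⋆ for a unique w⋆ ∈ ℝᵏ. -/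
/-!
With `M = ΦᵀDΦ` and `N = ΦᵀDPΦ`, a vector `Φw` solves the projected Bellman equation exactly
when `(M - γN) w = ΦᵀDR`, because `Φ` is injective and `M` is invertible. Testing `F_μ ⪰ 0`
against `(x, -x)` gives `xᵀNx ≤ xᵀMx`, hence `xᵀ(M - γN)x ≥ (1 - γ) xᵀMx > 0` for `x ≠ 0`,
since `M` is positive definite. So `M - γN` is invertible and the system has exactly one solution.
-/

open Matrix

namespace Matrix

variable {m n : Type*} [Fintype m] [Fintype n]

theorem dotProduct_mulVec_le_of_posSemidef_fromBlocks {𝕜 : Type*} [CommRing 𝕜] [LinearOrder 𝕜]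
    [IsStrictOrderedRing 𝕜] [StarRing 𝕜] [TrivialStar 𝕜] {M N : Matrix m m 𝕜}
    (hF : (fromBlocks M N Nᵀ M).PosSemidef) (x : m → 𝕜) :
    x ⬝ᵥ N *ᵥ x ≤ x ⬝ᵥ M *ᵥ x := by
  have h := hF.dotProduct_mulVec_nonneg (Sum.elim x (-x))
  simp only [star_trivial, fromBlocks_mulVec, Sum.elim_comp_inl, Sum.elim_comp_inr,
    sumElim_dotProduct_sumElim, mulVec_neg, dotProduct_add, dotProduct_neg, neg_dotProduct,
    neg_neg, dotProduct_transpose_mulVec] at h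
  linarith

theorem dotProduct_sub_smul_mulVec_pos {𝕜 : Type*} [CommRing 𝕜] [LinearOrder 𝕜]
    [IsStrictOrderedRing 𝕜] {M N : Matrix m m 𝕜} {γ : 𝕜}
    (hN : ∀ x, x ⬝ᵥ N *ᵥ x ≤ x ⬝ᵥ M *ᵥ x) (hγ0 : 0 ≤ γ) (hγ1 : γ < 1) {x : m → 𝕜}
    (hx : 0 < x ⬝ᵥ M *ᵥ x) : 0 < x ⬝ᵥ (M - γ • N) *ᵥ x := by
  rw [sub_mulVec, dotProduct_sub, smul_mulVec, dotProduct_smul, smul_eq_mul]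
  nlinarith [hN x]

variable [DecidableEq m]

theorem isUnit_of_forall_dotProduct_mulVec_pos {𝕜 : Type*} [Field 𝕜] [Preorder 𝕜]
    {A : Matrix m m 𝕜} (hA : ∀ x, x ≠ 0 → 0 < x ⬝ᵥ A *ᵥ x) : IsUnit A := by
  refine mulVec_injective_iff_isUnit.mp fun x y hxy => ?_
  by_contra hne
  have := hA (x - y) (sub_ne_zero.mpr hne)
  rw [mulVec_sub, hxy, sub_self, dotProduct_zero] at this
  exact this.false

theorem eq_inv_mulVec_iff {𝕜 : Type*} [CommRing 𝕜] {A : Matrix m m 𝕜} (hA : IsUnit A.det)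
    {w b : m → 𝕜} : w = A⁻¹ *ᵥ b ↔ A *ᵥ w = b := by
  constructor <;> rintro rfl
  · rw [mulVec_mulVec, mul_nonsing_inv A hA, one_mulVec]
  · rw [mulVec_mulVec, nonsing_inv_mul A hA, one_mulVec]

theorem existsUnique_mulVec_eq {𝕜 : Type*} [CommRing 𝕜] {A : Matrix m m 𝕜} (hA : IsUnit A)
    (b : m → 𝕜) : ∃! w, A *ᵥ w = b :=
  Function.Bijective.existsUnique
    ⟨mulVec_injective_of_isUnit hA, mulVec_surjective_iff_isUnit.mpr hA⟩ b

end Matrix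

theorem existsUnique_range_of_existsUnique_comp {α β : Type*} {f : α → β} {p : β → Prop}
    (h : ∃! x, p (f x)) : ∃! y, (∃ x, y = f x) ∧ p y := by
  obtain ⟨x, hx, huniq⟩ := h
  refine ⟨f x, ⟨⟨x, rfl⟩, hx⟩, ?_⟩
  rintro _ ⟨⟨x', rfl⟩, hx'⟩
  rw [huniq x' hx']

theorem projectedBellman_iff {𝕜 : Type*} [CommRing 𝕜] {m n : Type*} [Fintype m] [Fintype n]
    [DecidableEq m] {Φ : Matrix n m 𝕜} (hΦ : Function.Injective Φ.mulVec) {D P : Matrix n n 𝕜}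
    (hM : IsUnit (Φᵀ * D * Φ).det) (R : n → 𝕜) (γ : 𝕜) (w : m → 𝕜) :
    Φ *ᵥ w = (Φ * (Φᵀ * D * Φ)⁻¹ * Φᵀ * D) *ᵥ (R + γ • P *ᵥ Φ *ᵥ w) ↔
      (Φᵀ * D * Φ - γ • (Φᵀ * D * P * Φ)) *ᵥ w = (Φᵀ * D) *ᵥ R := by
  have hproj : ∀ v, (Φ * (Φᵀ * D * Φ)⁻¹ * Φᵀ * D) *ᵥ v =
      Φ *ᵥ ((Φᵀ * D * Φ)⁻¹ *ᵥ ((Φᵀ * D) *ᵥ v)) := by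
    intro v
    simp only [mulVec_mulVec, Matrix.mul_assoc]
  have hrhs : (Φᵀ * D) *ᵥ (R + γ • P *ᵥ Φ *ᵥ w) =
      (Φᵀ * D) *ᵥ R + γ • (Φᵀ * D * P * Φ) *ᵥ w := by
    simp only [mulVec_add, mulVec_smul, mulVec_mulVec, Matrix.mul_assoc]
  rw [hproj, hΦ.eq_iff, eq_inv_mulVec_iff hM, hrhs, sub_mulVec, smul_mulVec, sub_eq_iff_eq_add]

theorem stmt4_general (n k : ℕ)
    (P : Matrix (Fin n) (Fin n) ℝ)
    (R : Fin n → ℝ) (γ : ℝ) (hγ0 : 0 < γ) (hγ1 : γ < 1)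
    (Φ : Matrix (Fin n) (Fin k) ℝ) (hΦ : Function.Injective Φ.mulVec)
    (μ : Fin n → ℝ) (hμ0 : ∀ s, 0 < μ s)
    (D : Matrix (Fin n) (Fin n) ℝ) (hD : D = Matrix.diagonal μ)
    (Proj : Matrix (Fin n) (Fin n) ℝ)
    (hProj : Proj = Φ * (Φᵀ * D * Φ)⁻¹ * Φᵀ * D)
    (hF : (Matrix.fromBlocks (Φᵀ * D * Φ) (Φᵀ * D * P * Φ)
        (Φᵀ * Pᵀ * D * Φ) (Φᵀ * D * Φ)).PosSemidef) :
    (∃! V : Fin n → ℝ, (∃ w : Fin k → ℝ, V = Φ.mulVec w) ∧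
        V = Proj.mulVec (R + γ • P.mulVec V))
    ∧ (∃! w : Fin k → ℝ,
        Φ.mulVec w = Proj.mulVec (R + γ • P.mulVec (Φ.mulVec w))) := by
  subst hD hProj
  have hM : (Φᵀ * diagonal μ * Φ).PosDef := by
    simpa only [conjTranspose_eq_transpose_of_trivial] using
      (PosDef.diagonal hμ0).conjTranspose_mul_mul_same hΦ
  have hNT : Φᵀ * Pᵀ * diagonal μ * Φ = (Φᵀ * diagonal μ * P * Φ)ᵀ := by
    simp only [transpose_mul, diagonal_transpose, transpose_transpose, Matrix.mul_assoc]
  rw [hNT] at hF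
  have hA : IsUnit (Φᵀ * diagonal μ * Φ - γ • (Φᵀ * diagonal μ * P * Φ)) :=
    isUnit_of_forall_dotProduct_mulVec_pos fun x hx =>
      dotProduct_sub_smul_mulVec_pos (dotProduct_mulVec_le_of_posSemidef_fromBlocks hF)
        hγ0.le hγ1 (by simpa only [star_trivial] using hM.dotProduct_mulVec_pos hx)
  have hw : ∃! w, Φ *ᵥ w = (Φ * (Φᵀ * diagonal μ * Φ)⁻¹ * Φᵀ * diagonal μ) *ᵥ
      (R + γ • P *ᵥ Φ *ᵥ w) := by
    simpa only [projectedBellman_iff hΦ ((isUnit_iff_isUnit_det _).mp hM.isUnit)] using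
      existsUnique_mulVec_eq hA _
  exact ⟨existsUnique_range_of_existsUnique_comp hw, hw⟩

/-- if `F_μ ⪰ 0` then there is a unique `V̄` in the column space of `Φ`
satisfying the projected Bellman equation `V̄ = Π_μ(R + γPV̄)`, and `V̄ = Φw⋆` for a
unique `w⋆`. -/
theorem stmt4 (n k : ℕ)
    (P : Matrix (Fin n) (Fin n) ℝ)
    (hP0 : ∀ i j, 0 ≤ P i j) (hP1 : ∀ i, ∑ j, P i j = 1)
    (R : Fin n → ℝ) (γ : ℝ) (hγ0 : 0 < γ) (hγ1 : γ < 1)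
    (Φ : Matrix (Fin n) (Fin k) ℝ) (hΦ : Function.Injective Φ.mulVec)
    (μ : Fin n → ℝ) (hμ0 : ∀ s, 0 < μ s) (hμ1 : ∑ s, μ s = 1)
    (D : Matrix (Fin n) (Fin n) ℝ) (hD : D = Matrix.diagonal μ)
    (Proj : Matrix (Fin n) (Fin n) ℝ)
    (hProj : Proj = Φ * (Φᵀ * D * Φ)⁻¹ * Φᵀ * D)
    (hF : (Matrix.fromBlocks (Φᵀ * D * Φ) (Φᵀ * D * P * Φ)
        (Φᵀ * Pᵀ * D * Φ) (Φᵀ * D * Φ)).PosSemidef) :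
    (∃! V : Fin n → ℝ, (∃ w : Fin k → ℝ, V = Φ.mulVec w) ∧
        V = Proj.mulVec (R + γ • P.mulVec V))
    ∧ (∃! w : Fin k → ℝ,
        Φ.mulVec w = Proj.mulVec (R + γ • P.mulVec (Φ.mulVec w))) :=
  stmt4_general n k P R γ hγ0 hγ1 Φ hΦ μ hμ0 D hD Proj hProj hF
end

section
/- Suppose μ satisfies the contraction mapping condition, i.e. the block matrix F_μ = [[ΦᵀD_μΦ, ΦᵀD_μPΦ], [ΦᵀPᵀD_μΦ, ΦᵀD_μΦ]] is positive semidefinite, and let ν be a stationary distribution of P (νᵀP = νᵀ) with ν(s) > 0 for all s. Let V ∈ ℝⁿ be the unique solution of the Bellman equation V = R + γPV, and let w⋆ ∈ ℝᵏ satisfy the projected fixed-point equation Φw⋆ = Π_μ(R + γPΦw⋆). Then ‖Φw⋆ − V‖_μ ≤ ((1 + γ√δ(ν,μ))/(1 − γ)) · ‖Π_μV − V‖_μ, where δ(ν,μ) = max over pairs of states s, s̃ of (ν(s)/μ(s))·(μ(s̃)/ν(s̃)), and ‖Π_μV − V‖_μ = min_{w ∈ ℝᵏ} ‖Φw − V‖_μ.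 -/
open Matrix

noncomputable section

/-!
Split the error as `Φw⋆ − V = e + ε` with `e = Φw⋆ − Π_μV`, a feature vector, and
`ε = Π_μV − V`. Subtracting the two fixed-point equations gives `e = γ Π_μ P (e + ε)`; pairing
with `e` in the μ-inner product, where `Π_μ` may be dropped because `e` is a feature vector, gives
`‖e‖² = γ (⟨e, Pe⟩ + ⟨e, Pε⟩)`. Testing `F_μ ⪰ 0` against `(u, −u)` gives `⟨Φu, PΦu⟩ ≤ ‖Φu‖²`,
and Jensen in each row of `P` together with `μᵀP ≤ δ μᵀ` (stationarity of ν) gives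
`‖Pz‖ ≤ √δ ‖z‖`. Hence `(1 − γ) ‖e‖ ≤ γ √δ ‖ε‖`, and the triangle inequality concludes.
-/

section SqrtWeight

variable {ι : Type*} {μ : ι → ℝ}

def sqrtWeight (μ : ι → ℝ) : (ι → ℝ) →ₗ[ℝ] EuclideanSpace ℝ ι where
  toFun x := WithLp.toLp 2 fun s => √(μ s) * x s
  map_add' x y := by ext s; simp [mul_add]
  map_smul' c x := by ext s; simp [mul_left_comm]

@[simp]
theorem sqrtWeight_apply (μ x : ι → ℝ) (s : ι) : sqrtWeight μ x s = √(μ s) * x s := rfl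

theorem inner_sqrtWeight [Fintype ι] [DecidableEq ι] (hμ : ∀ s, 0 ≤ μ s) (x y : ι → ℝ) :
    inner ℝ (sqrtWeight μ x) (sqrtWeight μ y) = x ⬝ᵥ (diagonal μ *ᵥ y) := by
  simp only [PiLp.inner_apply, sqrtWeight_apply, dotProduct, mulVec_diagonal,
    RCLike.inner_apply, conj_trivial]
  refine Finset.sum_congr rfl fun s _ => ?_
  linear_combination (x s * y s) * Real.mul_self_sqrt (hμ s)

end SqrtWeight

section Stochastic

variable {m : Type*} [Fintype m] {P : Matrix m m ℝ}

theorem sum_mul_apply_le_of_stationary (hP0 : ∀ s t, 0 ≤ P s t) {ν μ : m → ℝ}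
    (hν : ∀ t, ∑ s, ν s * P s t = ν t) (hν0 : ∀ s, 0 < ν s) (hμ0 : ∀ s, 0 < μ s) {δ : ℝ}
    (hδ : ∀ s t, ν t / μ t * (μ s / ν s) ≤ δ) (t : m) :
    ∑ s, μ s * P s t ≤ δ * μ t := by
  have hμν : ∀ s, μ s ≤ δ * μ t / ν t * ν s := fun s => by
    have := hδ s t
    rw [div_mul_div_comm, div_le_iff₀ (by have := hμ0 t; have := hν0 s; positivity)] at this
    rw [div_mul_eq_mul_div, le_div_iff₀ (hν0 t)]
    linarith
  calc ∑ s, μ s * P s t ≤ ∑ s, δ * μ t / ν t * (ν s * P s t) :=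
        Finset.sum_le_sum fun s _ => by
          rw [← mul_assoc]; exact mul_le_mul_of_nonneg_right (hμν s) (hP0 s t)
    _ = δ * μ t := by rw [← Finset.mul_sum, hν, div_mul_cancel₀ _ (hν0 t).ne']

theorem mulVec_apply_sq_le (hP0 : ∀ s t, 0 ≤ P s t) (hP1 : ∀ s, ∑ t, P s t = 1) (z : m → ℝ)
    (s : m) : (P *ᵥ z) s ^ 2 ≤ ∑ t, P s t * z t ^ 2 := by
  simpa only [mulVec, dotProduct, smul_eq_mul] using
    (even_two.convexOn_pow (𝕜 := ℝ)).map_sum_le (t := Finset.univ) (w := P s) (p := z)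
      (fun t _ => hP0 s t) (hP1 s) (fun t _ => Set.mem_univ _)

end Stochastic

section WeightedNorm

variable {n : ℕ} {μ : Fin n → ℝ}

theorem norm_sqrtWeight (hμ : ∀ s, 0 ≤ μ s) (x : Fin n → ℝ) : ‖sqrtWeight μ x‖ = wnorm μ x := by
  simp only [EuclideanSpace.norm_eq, sqrtWeight_apply, Real.norm_eq_abs, sq_abs, mul_pow,
    Real.sq_sqrt (hμ _), wnorm]

theorem wnorm_nonneg (μ x : Fin n → ℝ) : 0 ≤ wnorm μ x := Real.sqrt_nonneg _

theorem sq_wnorm (hμ : ∀ s, 0 ≤ μ s) (x : Fin n → ℝ) :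
    wnorm μ x ^ 2 = x ⬝ᵥ (diagonal μ *ᵥ x) := by
  rw [← norm_sqrtWeight hμ, ← real_inner_self_eq_norm_sq, inner_sqrtWeight hμ]

theorem dotProduct_diagonal_mulVec_le (hμ : ∀ s, 0 ≤ μ s) (x y : Fin n → ℝ) :
    x ⬝ᵥ (diagonal μ *ᵥ y) ≤ wnorm μ x * wnorm μ y := by
  rw [← inner_sqrtWeight hμ, ← norm_sqrtWeight hμ, ← norm_sqrtWeight hμ]
  exact real_inner_le_norm _ _

theorem wnorm_add_le (hμ : ∀ s, 0 ≤ μ s) (x y : Fin n → ℝ) :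
    wnorm μ (x + y) ≤ wnorm μ x + wnorm μ y := by
  simpa only [← norm_sqrtWeight hμ, map_add] using norm_add_le _ _

theorem wnorm_mulVec_le (hμ : ∀ s, 0 ≤ μ s) {P : Matrix (Fin n) (Fin n) ℝ}
    (hP0 : ∀ s t, 0 ≤ P s t) (hP1 : ∀ s, ∑ t, P s t = 1) {c : ℝ}
    (hc : ∀ t, ∑ s, μ s * P s t ≤ c * μ t) (z : Fin n → ℝ) :
    wnorm μ (P *ᵥ z) ≤ √c * wnorm μ z := by
  rw [wnorm, wnorm, ← Real.sqrt_mul' _ (Finset.sum_nonneg fun s _ => by have := hμ s; positivity)]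
  refine Real.sqrt_le_sqrt ?_
  calc ∑ s, μ s * (P *ᵥ z) s ^ 2 ≤ ∑ s, μ s * ∑ t, P s t * z t ^ 2 :=
        Finset.sum_le_sum fun s _ =>
          mul_le_mul_of_nonneg_left (mulVec_apply_sq_le hP0 hP1 z s) (hμ s)
    _ = ∑ t, (∑ s, μ s * P s t) * z t ^ 2 := by
        simp only [Finset.mul_sum, Finset.sum_mul, mul_assoc]
        exact Finset.sum_comm
    _ ≤ ∑ t, c * μ t * z t ^ 2 :=
        Finset.sum_le_sum fun t _ => mul_le_mul_of_nonneg_right (hc t) (sq_nonneg _)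
    _ = c * ∑ t, μ t * z t ^ 2 := by simp only [Finset.mul_sum, mul_assoc]

end WeightedNorm

theorem Matrix.PosSemidef.dotProduct_offDiag_le {m : Type*} [Fintype m] {A B C : Matrix m m ℝ}
    (h : (fromBlocks A B C A).PosSemidef) (u : m → ℝ) :
    u ⬝ᵥ (B *ᵥ u) + u ⬝ᵥ (C *ᵥ u) ≤ 2 * (u ⬝ᵥ (A *ᵥ u)) := by
  have h := h.dotProduct_mulVec_nonneg (Sum.elim u (-u))
  simp only [fromBlocks_mulVec, star_trivial, Sum.elim_comp_inl, Sum.elim_comp_inr,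
    sumElim_dotProduct_sumElim, mulVec_neg, dotProduct_add, dotProduct_neg, neg_dotProduct] at h
  linarith

section Projection

variable {m k : Type*} [Fintype m] [Fintype k]

theorem dotProduct_mulVec_eq_dotProduct_transpose_mulVec (Φ : Matrix m k ℝ) (u : k → ℝ)
    (y : m → ℝ) : (Φ *ᵥ u) ⬝ᵥ y = u ⬝ᵥ (Φᵀ *ᵥ y) := by
  rw [dotProduct_transpose_mulVec, dotProduct_comm]

theorem dotProduct_transpose_mul_mul_mulVec (Φ : Matrix m k ℝ) (M : Matrix m m ℝ) (u : k → ℝ) :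
    u ⬝ᵥ ((Φᵀ * M * Φ) *ᵥ u) = (Φ *ᵥ u) ⬝ᵥ (M *ᵥ (Φ *ᵥ u)) := by
  rw [← mulVec_mulVec, ← mulVec_mulVec, dotProduct_mulVec_eq_dotProduct_transpose_mulVec]

theorem dotProduct_mulVec_le_of_fromBlocks_posSemidef {Φ : Matrix m k ℝ} {D P : Matrix m m ℝ}
    (hD : Dᵀ = D) (hF : (fromBlocks (Φᵀ * D * Φ) (Φᵀ * D * P * Φ)
        (Φᵀ * Pᵀ * D * Φ) (Φᵀ * D * Φ)).PosSemidef) (u : k → ℝ) :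
    (Φ *ᵥ u) ⬝ᵥ (D *ᵥ (P *ᵥ (Φ *ᵥ u))) ≤ (Φ *ᵥ u) ⬝ᵥ (D *ᵥ (Φ *ᵥ u)) := by
  have h := hF.dotProduct_offDiag_le u
  have hB : Φᵀ * D * P * Φ = Φᵀ * (D * P) * Φ := by rw [Matrix.mul_assoc Φᵀ]
  have hC : Φᵀ * Pᵀ * D * Φ = Φᵀ * (D * P)ᵀ * Φ := by
    rw [transpose_mul, hD, Matrix.mul_assoc Φᵀ]
  have hCu : (Φ *ᵥ u) ⬝ᵥ ((D * P)ᵀ *ᵥ (Φ *ᵥ u)) = (Φ *ᵥ u) ⬝ᵥ ((D * P) *ᵥ (Φ *ᵥ u)) := by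
    rw [mulVec_transpose, dotProduct_mulVec, dotProduct_comm]
  rw [hB, hC, dotProduct_transpose_mul_mul_mulVec, dotProduct_transpose_mul_mul_mulVec,
    dotProduct_transpose_mul_mul_mulVec, hCu, ← mulVec_mulVec] at h
  linarith

variable [DecidableEq k]

def weightedProj (Φ : Matrix m k ℝ) (D : Matrix m m ℝ) : Matrix m m ℝ :=
  Φ * (Φᵀ * D * Φ)⁻¹ * Φᵀ * D

theorem weightedProj_mulVec (Φ : Matrix m k ℝ) (D : Matrix m m ℝ) (z : m → ℝ) :
    weightedProj Φ D *ᵥ z = Φ *ᵥ (((Φᵀ * D * Φ)⁻¹ * Φᵀ * D) *ᵥ z) := by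
  simp only [weightedProj, mulVec_mulVec, Matrix.mul_assoc]

theorem isUnit_det_transpose_mul_diagonal_mul [DecidableEq m] {Φ : Matrix m k ℝ}
    (hΦ : Function.Injective Φ.mulVec) {μ : m → ℝ} (hμ : ∀ s, 0 < μ s) :
    IsUnit (Φᵀ * diagonal μ * Φ).det :=
  (isUnit_iff_isUnit_det _).mp ((posDef_diagonal_iff.mpr hμ).conjTranspose_mul_mul_same hΦ).isUnit

theorem dotProduct_mulVec_weightedProj {Φ : Matrix m k ℝ} {D : Matrix m m ℝ}
    (hA : IsUnit (Φᵀ * D * Φ).det) (u : k → ℝ) (z : m → ℝ) :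
    (Φ *ᵥ u) ⬝ᵥ (D *ᵥ (weightedProj Φ D *ᵥ z)) = (Φ *ᵥ u) ⬝ᵥ (D *ᵥ z) := by
  have hA' : Φᵀ * D * Φ * (Φᵀ * D * Φ)⁻¹ * Φᵀ * D = Φᵀ * D := by
    rw [mul_nonsing_inv _ hA, Matrix.one_mul]
  rw [dotProduct_mulVec_eq_dotProduct_transpose_mulVec,
    dotProduct_mulVec_eq_dotProduct_transpose_mulVec]
  simp only [weightedProj, mulVec_mulVec, ← Matrix.mul_assoc, hA']

theorem dotProduct_mulVec_sub_weightedProj_of_fixedPoint {Φ : Matrix m k ℝ}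
    {D P : Matrix m m ℝ} (hA : IsUnit (Φᵀ * D * Φ).det) {R V : m → ℝ} {w : k → ℝ} {γ : ℝ}
    (hV : V = R + γ • P *ᵥ V) (hw : Φ *ᵥ w = weightedProj Φ D *ᵥ (R + γ • P *ᵥ (Φ *ᵥ w))) :
    (Φ *ᵥ w - weightedProj Φ D *ᵥ V) ⬝ᵥ (D *ᵥ (Φ *ᵥ w - weightedProj Φ D *ᵥ V))
      = γ * ((Φ *ᵥ w - weightedProj Φ D *ᵥ V) ⬝ᵥ (D *ᵥ (P *ᵥ (Φ *ᵥ w - V)))) := by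
  have hdiff : Φ *ᵥ w - weightedProj Φ D *ᵥ V = γ • weightedProj Φ D *ᵥ (P *ᵥ (Φ *ᵥ w - V)) := by
    conv_lhs => rw [hw, hV]
    simp only [mulVec_add, mulVec_smul, mulVec_sub, smul_sub]
    abel
  nth_rewrite 2 [hdiff]
  rw [weightedProj_mulVec Φ D V, ← mulVec_sub, mulVec_smul, dotProduct_smul, smul_eq_mul,
    dotProduct_mulVec_weightedProj hA]

end Projection

theorem add_le_of_sq_le_mul {γ c a b : ℝ} (hγ0 : 0 ≤ γ) (hγ1 : γ < 1) (hc : 0 ≤ c) (ha : 0 ≤ a)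
    (hb : 0 ≤ b) (h : a ^ 2 ≤ γ * (a ^ 2 + c * a * b)) :
    a + b ≤ (1 + γ * c) / (1 - γ) * b := by
  have hab : (1 - γ) * a ≤ γ * c * b := by
    rcases ha.eq_or_lt with rfl | ha
    · simp only [mul_zero]; positivity
    · exact le_of_mul_le_mul_right (by linarith) ha
  rw [div_mul_eq_mul_div, le_div_iff₀ (by linarith)]
  nlinarith

theorem stmt5_general (n k : ℕ)
    (P : Matrix (Fin n) (Fin n) ℝ)
    (hP0 : ∀ i j, 0 ≤ P i j) (hP1 : ∀ i, ∑ j, P i j = 1)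
    (R : Fin n → ℝ) (γ : ℝ) (hγ0 : 0 < γ) (hγ1 : γ < 1)
    (Φ : Matrix (Fin n) (Fin k) ℝ) (hΦ : Function.Injective Φ.mulVec)
    (μ : Fin n → ℝ) (hμ0 : ∀ s, 0 < μ s)
    (D : Matrix (Fin n) (Fin n) ℝ) (hD : D = Matrix.diagonal μ)
    (Proj : Matrix (Fin n) (Fin n) ℝ)
    (hProj : Proj = Φ * (Φᵀ * D * Φ)⁻¹ * Φᵀ * D)
    -- contraction mapping condition
    (hF : (Matrix.fromBlocks (Φᵀ * D * Φ) (Φᵀ * D * P * Φ)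
        (Φᵀ * Pᵀ * D * Φ) (Φᵀ * D * Φ)).PosSemidef)
    -- ν is a stationary distribution of P with full support
    (ν : Fin n → ℝ) (hν0 : ∀ s, 0 < ν s)
    (hstat : ∀ s', ∑ s, ν s * P s s' = ν s')
    -- V is the (unique) solution of the Bellman equation
    (V : Fin n → ℝ) (hV : V = R + γ • P.mulVec V)
    -- w⋆ satisfies the projected fixed-point equation
    (w : Fin k → ℝ)
    (hw : Φ.mulVec w = Proj.mulVec (R + γ • P.mulVec (Φ.mulVec w)))
    -- δ(ν, μ) is the maximum of (ν s / μ s) · (μ s̃ / ν s̃) over pairs of states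
    (δ : ℝ)
    (hδ : IsGreatest {d : ℝ | ∃ s t : Fin n, d = ν s / μ s * (μ t / ν t)} δ) :
    wnorm μ (Φ.mulVec w - V)
      ≤ ((1 + γ * Real.sqrt δ) / (1 - γ)) * wnorm μ (Proj.mulVec V - V) := by
  subst hD
  obtain rfl : Proj = weightedProj Φ (diagonal μ) := hProj
  have hμ : ∀ s, 0 ≤ μ s := fun s => (hμ0 s).le
  have herror := dotProduct_mulVec_sub_weightedProj_of_fixedPoint
    (isUnit_det_transpose_mul_diagonal_mul hΦ hμ0) hV hw
  set e := Φ *ᵥ w - weightedProj Φ (diagonal μ) *ᵥ V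
  set ε := weightedProj Φ (diagonal μ) *ᵥ V - V
  obtain ⟨u, hu⟩ : ∃ u, e = Φ *ᵥ u := ⟨w - ((Φᵀ * diagonal μ * Φ)⁻¹ * Φᵀ * diagonal μ) *ᵥ V,
    by rw [mulVec_sub, ← weightedProj_mulVec]⟩
  have hPe : e ⬝ᵥ (diagonal μ *ᵥ (P *ᵥ e)) ≤ wnorm μ e ^ 2 := by
    rw [sq_wnorm hμ, hu]
    exact dotProduct_mulVec_le_of_fromBlocks_posSemidef (diagonal_transpose μ) hF u
  have hPε : wnorm μ (P *ᵥ ε) ≤ √δ * wnorm μ ε := wnorm_mulVec_le hμ hP0 hP1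
    (sum_mul_apply_le_of_stationary hP0 hstat hν0 hμ0 fun s t => hδ.2 ⟨t, s, rfl⟩) ε
  have key : wnorm μ e ^ 2 ≤ γ * (wnorm μ e ^ 2 + √δ * wnorm μ e * wnorm μ ε) :=
    calc wnorm μ e ^ 2
        = γ * (e ⬝ᵥ (diagonal μ *ᵥ (P *ᵥ e)) + e ⬝ᵥ (diagonal μ *ᵥ (P *ᵥ ε))) := by
          rw [sq_wnorm hμ, herror, ← sub_add_sub_cancel _ (weightedProj Φ (diagonal μ) *ᵥ V),
            mulVec_add, mulVec_add, dotProduct_add]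
      _ ≤ γ * (wnorm μ e ^ 2 + wnorm μ e * (√δ * wnorm μ ε)) := by
          gcongr
          exact (dotProduct_diagonal_mulVec_le hμ _ _).trans (by gcongr; exact wnorm_nonneg _ _)
      _ = γ * (wnorm μ e ^ 2 + √δ * wnorm μ e * wnorm μ ε) := by ring
  calc wnorm μ (Φ *ᵥ w - V) ≤ wnorm μ e + wnorm μ ε := by
        simpa only [e, ε, sub_add_sub_cancel] using wnorm_add_le hμ e ε
    _ ≤ _ := add_le_of_sq_le_mul hγ0.le hγ1 (Real.sqrt_nonneg δ) (wnorm_nonneg _ _)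
        (wnorm_nonneg _ _) key

/-- approximation-error bound for the TD fixed point under the
contraction mapping condition `F_μ ⪰ 0`:
`‖Φw⋆ − V‖_μ ≤ ((1 + γ√δ(ν,μ))/(1 − γ)) · ‖Π_μV − V‖_μ`. -/
theorem stmt5 (n k : ℕ)
    (P : Matrix (Fin n) (Fin n) ℝ)
    (hP0 : ∀ i j, 0 ≤ P i j) (hP1 : ∀ i, ∑ j, P i j = 1)
    (R : Fin n → ℝ) (γ : ℝ) (hγ0 : 0 < γ) (hγ1 : γ < 1)
    (Φ : Matrix (Fin n) (Fin k) ℝ) (hΦ : Function.Injective Φ.mulVec)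
    (μ : Fin n → ℝ) (hμ0 : ∀ s, 0 < μ s) (hμ1 : ∑ s, μ s = 1)
    (D : Matrix (Fin n) (Fin n) ℝ) (hD : D = Matrix.diagonal μ)
    (Proj : Matrix (Fin n) (Fin n) ℝ)
    (hProj : Proj = Φ * (Φᵀ * D * Φ)⁻¹ * Φᵀ * D)
    -- contraction mapping condition
    (hF : (Matrix.fromBlocks (Φᵀ * D * Φ) (Φᵀ * D * P * Φ)
        (Φᵀ * Pᵀ * D * Φ) (Φᵀ * D * Φ)).PosSemidef)
    -- ν is a stationary distribution of P with full support
    (ν : Fin n → ℝ) (hν0 : ∀ s, 0 < ν s) (hν1 : ∑ s, ν s = 1)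
    (hstat : ∀ s', ∑ s, ν s * P s s' = ν s')
    -- V is the (unique) solution of the Bellman equation
    (V : Fin n → ℝ) (hV : V = R + γ • P.mulVec V)
    -- w⋆ satisfies the projected fixed-point equation
    (w : Fin k → ℝ)
    (hw : Φ.mulVec w = Proj.mulVec (R + γ • P.mulVec (Φ.mulVec w)))
    -- δ(ν, μ) is the maximum of (ν s / μ s) · (μ s̃ / ν s̃) over pairs of states
    (δ : ℝ)
    (hδ : IsGreatest {d : ℝ | ∃ s t : Fin n, d = ν s / μ s * (μ t / ν t)} δ) :
    wnorm μ (Φ.mulVec w - V)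
      ≤ ((1 + γ * Real.sqrt δ) / (1 - γ)) * wnorm μ (Proj.mulVec V - V) :=
  stmt5_general n k P hP0 hP1 R γ hγ0 hγ1 Φ hΦ μ hμ0 D hD Proj hProj hF ν hν0 hstat V hV w hw δ hδ
end
end

section
/- (On-policy feasibility of the contraction mapping condition.) Let P ∈ ℝ^{n×n} be row-stochastic, let ν be a stationary distribution of P (νᵀP = νᵀ) with ν(s) > 0 for all s, let D_ν = diag(ν), and let Φ ∈ ℝ^{n×k} be any feature matrix. Then the block matrix [[ΦᵀD_νΦ, ΦᵀD_νPΦ], [ΦᵀPᵀD_νΦ, ΦᵀD_νΦ]] is positive semidefinite; equivalently, the stationary distribution ν satisfies the contraction mapping condition E_{s∼ν}[F(s)] ⪰ 0 with F(s) = E_{s'∼P(s,·)} [[φ(s)φ(s)ᵀ, φ(s)φ(s')ᵀ], [φ(s')φ(s)ᵀ, φ(s)φ(s)ᵀ]], where φ(s)ᵀ is the s-th row of Φ. -/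
/-!
Let `s ∼ ν` and `s' ∼ P(s, ·)`. Row-stochasticity of `P` says that `s` has law `ν`, and
stationarity says that `s'` has law `ν` too, so `ΦᵀD_νΦ` is both `E[φ(s)φ(s)ᵀ]` and
`E[φ(s')φ(s')ᵀ]`. Hence the block matrix is the second moment `E[ψψᵀ]` of `ψ = (φ(s), φ(s'))`,
a nonnegative combination of rank-one positive semidefinite matrices, and `E_ν[F]` is the same
matrix because it only differs from it by writing `φ(s)φ(s)ᵀ` for `φ(s')φ(s')ᵀ` in one corner.
-/

open Matrix Finset

namespace Matrix

variable {ι m o l p R M : Type*}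

section Marginals

variable [Fintype ι] [CommSemiring R] [AddCommMonoid M] [Module R M]
  {P : Matrix ι ι R} {ν : ι → R}

theorem sum_sum_mul_smul_left_of_sum_row_eq_one (hP : ∀ i, ∑ j, P i j = 1) (g : ι → M) :
    ∑ i, ∑ j, (ν i * P i j) • g i = ∑ i, ν i • g i := by
  refine sum_congr rfl fun i _ => ?_
  rw [← sum_smul, ← mul_sum, hP, mul_one]

theorem sum_sum_mul_smul_right_of_stationary (hν : ∀ j, ∑ i, ν i * P i j = ν j)
    (g : ι → M) :
    ∑ i, ∑ j, (ν i * P i j) • g j = ∑ j, ν j • g j := by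
  rw [sum_comm]
  refine sum_congr rfl fun j _ => ?_
  rw [← sum_smul, hν]

end Marginals

theorem transpose_mul_mul_eq_sum_sum_smul_vecMulVec [Fintype ι] [CommSemiring R]
    (Φ : Matrix ι m R) (A : Matrix ι ι R) :
    Φᵀ * A * Φ = ∑ i, ∑ j, A i j • vecMulVec (Φ i) (Φ j) := by
  ext a b
  simp only [mul_apply, transpose_apply, sum_apply, smul_apply, vecMulVec_apply, smul_eq_mul,
    sum_mul]
  rw [sum_comm]
  exact sum_congr rfl fun i _ => sum_congr rfl fun j _ => by ring

theorem transpose_mul_diagonal_mul_eq_sum_smul_vecMulVec [Fintype ι] [CommSemiring R]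
    [DecidableEq ι] (Φ : Matrix ι m R) (d : ι → R) :
    Φᵀ * diagonal d * Φ = ∑ i, d i • vecMulVec (Φ i) (Φ i) := by
  rw [transpose_mul_mul_eq_sum_sum_smul_vecMulVec]
  refine sum_congr rfl fun i _ => ?_
  rw [sum_eq_single i (fun j _ hj => by simp [diagonal_apply_ne _ hj.symm]) (by simp),
    diagonal_apply_eq]

theorem vecMulVec_sumElim [Mul R] (a : m → R) (b : o → R) (c : l → R) (d : p → R) :
    vecMulVec (Sum.elim a b) (Sum.elim c d) =
      fromBlocks (vecMulVec a c) (vecMulVec a d) (vecMulVec b c) (vecMulVec b d) := by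
  ext (i | i) (j | j) <;> rfl

theorem fromBlocks_sum [AddCommMonoid R] (s : Finset ι) (A : ι → Matrix m l R)
    (B : ι → Matrix m p R) (C : ι → Matrix o l R) (D : ι → Matrix o p R) :
    fromBlocks (∑ x ∈ s, A x) (∑ x ∈ s, B x) (∑ x ∈ s, C x) (∑ x ∈ s, D x) =
      ∑ x ∈ s, fromBlocks (A x) (B x) (C x) (D x) := by
  ext (i | i) (j | j) <;> simp [sum_apply]

theorem posSemidef_sum_smul_vecMulVec_self_star [Fintype ι] [Fintype m] [CommRing R]
    [PartialOrder R] [StarRing R] [StarOrderedRing R] {w : ι → R} (hw : ∀ i, 0 ≤ w i)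
    (u : ι → m → R) :
    (∑ i, w i • vecMulVec (u i) (star (u i))).PosSemidef :=
  posSemidef_sum _ fun i _ => (posSemidef_vecMulVec_self_star (u i)).smul (hw i)

end Matrix

theorem stmt11_general (n k : ℕ)
    (P : Matrix (Fin n) (Fin n) ℝ)
    (hP0 : ∀ i j, 0 ≤ P i j) (hP1 : ∀ i, ∑ j, P i j = 1)
    (ν : Fin n → ℝ) (hν0 : ∀ s, 0 < ν s)
    (hstat : ∀ s', ∑ s, ν s * P s s' = ν s')
    (Φ : Matrix (Fin n) (Fin k) ℝ)
    (D : Matrix (Fin n) (Fin n) ℝ) (hD : D = Matrix.diagonal ν)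
    (F : Fin n → Matrix (Fin k ⊕ Fin k) (Fin k ⊕ Fin k) ℝ)
    (hF : ∀ s, F s = ∑ s', P s s' •
        Matrix.fromBlocks (vecMulVec (Φ s) (Φ s)) (vecMulVec (Φ s) (Φ s'))
          (vecMulVec (Φ s') (Φ s)) (vecMulVec (Φ s) (Φ s))) :
    (Matrix.fromBlocks (Φᵀ * D * Φ) (Φᵀ * D * P * Φ)
        (Φᵀ * Pᵀ * D * Φ) (Φᵀ * D * Φ)).PosSemidef
      ∧ (∑ s, ν s • F s).PosSemidef := by
  have hdiag_fst : Φᵀ * D * Φ = ∑ s, ∑ s', (ν s * P s s') • vecMulVec (Φ s) (Φ s) := by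
    rw [hD, transpose_mul_diagonal_mul_eq_sum_smul_vecMulVec,
      sum_sum_mul_smul_left_of_sum_row_eq_one hP1]
  have hdiag_snd : Φᵀ * D * Φ = ∑ s, ∑ s', (ν s * P s s') • vecMulVec (Φ s') (Φ s') := by
    rw [hD, transpose_mul_diagonal_mul_eq_sum_smul_vecMulVec,
      sum_sum_mul_smul_right_of_stationary hstat]
  have hcross : Φᵀ * D * P * Φ = ∑ s, ∑ s', (ν s * P s s') • vecMulVec (Φ s) (Φ s') := by
    rw [hD, Matrix.mul_assoc Φᵀ, transpose_mul_mul_eq_sum_sum_smul_vecMulVec]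
    simp only [diagonal_mul]
  have hcross_symm :
      Φᵀ * Pᵀ * D * Φ = ∑ s, ∑ s', (ν s * P s s') • vecMulVec (Φ s') (Φ s) := by
    rw [hD, Matrix.mul_assoc Φᵀ, transpose_mul_mul_eq_sum_sum_smul_vecMulVec, sum_comm]
    simp only [mul_diagonal, transpose_apply, mul_comm]
  have hGram : fromBlocks (Φᵀ * D * Φ) (Φᵀ * D * P * Φ) (Φᵀ * Pᵀ * D * Φ) (Φᵀ * D * Φ) =
      ∑ s, ∑ s', (ν s * P s s') •
        vecMulVec (Sum.elim (Φ s) (Φ s')) (Sum.elim (Φ s) (Φ s')) := by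
    nth_rw 1 [hdiag_fst]
    rw [hdiag_snd, hcross, hcross_symm]
    simp only [fromBlocks_sum, ← fromBlocks_smul, vecMulVec_sumElim]
  have hexp : ∑ s, ν s • F s =
      fromBlocks (Φᵀ * D * Φ) (Φᵀ * D * P * Φ) (Φᵀ * Pᵀ * D * Φ) (Φᵀ * D * Φ) := by
    rw [hcross, hcross_symm, hdiag_fst]
    simp only [hF, smul_sum, smul_smul, fromBlocks_sum, ← fromBlocks_smul]
  have hpsd :
      (fromBlocks (Φᵀ * D * Φ) (Φᵀ * D * P * Φ) (Φᵀ * Pᵀ * D * Φ) (Φᵀ * D * Φ)).PosSemidef := by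
    rw [hGram, ← Fintype.sum_prod_type']
    simpa using posSemidef_sum_smul_vecMulVec_self_star
      (fun x => mul_nonneg (hν0 x.1).le (hP0 x.1 x.2))
      (fun x : Fin n × Fin n => Sum.elim (Φ x.1) (Φ x.2))
  exact ⟨hpsd, hexp ▸ hpsd⟩

/-- on-policy feasibility of the contraction mapping condition:
for a stationary distribution ν of a row-stochastic matrix P with full support,
the block matrix `[[ΦᵀD_νΦ, ΦᵀD_νPΦ], [ΦᵀPᵀD_νΦ, ΦᵀD_νΦ]]` is positive semidefinite;
equivalently, `E_{s∼ν}[F(s)] ⪰ 0`. -/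
theorem stmt11 (n k : ℕ)
    (P : Matrix (Fin n) (Fin n) ℝ)
    (hP0 : ∀ i j, 0 ≤ P i j) (hP1 : ∀ i, ∑ j, P i j = 1)
    (ν : Fin n → ℝ) (hν0 : ∀ s, 0 < ν s) (hν1 : ∑ s, ν s = 1)
    (hstat : ∀ s', ∑ s, ν s * P s s' = ν s')
    (Φ : Matrix (Fin n) (Fin k) ℝ)
    (D : Matrix (Fin n) (Fin n) ℝ) (hD : D = Matrix.diagonal ν)
    (F : Fin n → Matrix (Fin k ⊕ Fin k) (Fin k ⊕ Fin k) ℝ)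
    (hF : ∀ s, F s = ∑ s', P s s' •
        Matrix.fromBlocks (vecMulVec (Φ s) (Φ s)) (vecMulVec (Φ s) (Φ s'))
          (vecMulVec (Φ s') (Φ s)) (vecMulVec (Φ s) (Φ s))) :
    (Matrix.fromBlocks (Φᵀ * D * Φ) (Φᵀ * D * P * Φ)
        (Φᵀ * Pᵀ * D * Φ) (Φᵀ * D * Φ)).PosSemidef
      ∧ (∑ s, ν s • F s).PosSemidef :=
  stmt11_general n k P hP0 hP1 ν hν0 hstat Φ D hD F hF
end
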